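/- Let 𝓜 be a quantum channel on M_d(ℂ) and suppose κ is positive semidefinite with κ ≤ 𝓜(|ξ⟩⟨ξ|) for every unit vector ξ, and Tr(κ) > 0. Then for any two density matrices ρ, σ and every n ≥ 0, ‖𝓜ⁿ(ρ) − 𝓜ⁿ(σ)‖₁ ≤ 2(1 − Tr(κ))ⁿ; in particular the iterates of 𝓜 on any two initial states converge to each other exponentially fast. -/

import Mathlib

open Matrix BigOperators Filter ComplexOrder

/-- The old Mathlib `Matrix.PosSemidef.sqrt` (removed since), with its old definition. -/
noncomputable def psdSqrt {d : ℕ} {A : Matrix (Fin d) (Fin d) ℂ} (hA : A.PosSemidef) :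
    Matrix (Fin d) (Fin d) ℂ :=
  (hA.1.eigenvectorUnitary : Matrix (Fin d) (Fin d) ℂ) *
    diagonal (((↑) : ℝ → ℂ) ∘ (√·) ∘ hA.1.eigenvalues) *
    (star hA.1.eigenvectorUnitary : Matrix (Fin d) (Fin d) ℂ)

/-- Trace norm: `Tr √(aᴴa)`, the sum of singular values. -/
noncomputable def traceNorm {d : ℕ} (a : Matrix (Fin d) (Fin d) ℂ) : ℝ :=
  ((psdSqrt (Matrix.posSemidef_conjTranspose_mul_self a)).trace).re

/-- Absolute value `√(bᴴb)` of a matrix. -/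
noncomputable def matAbs {d : ℕ} (b : Matrix (Fin d) (Fin d) ℂ) : Matrix (Fin d) (Fin d) ℂ :=
  psdSqrt (Matrix.posSemidef_conjTranspose_mul_self b)

/-- Positive part `b₊ = (|b| + b)/2` (for `b` self-adjoint). -/
noncomputable def matPosPart {d : ℕ} (b : Matrix (Fin d) (Fin d) ℂ) : Matrix (Fin d) (Fin d) ℂ :=
  (1/2 : ℂ) • (matAbs b + b)

/-- Negative part `b₋ = (|b| - b)/2` (for `b` self-adjoint). -/
noncomputable def matNegPart {d : ℕ} (b : Matrix (Fin d) (Fin d) ℂ) : Matrix (Fin d) (Fin d) ℂ :=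
  (1/2 : ℂ) • (matAbs b - b)

/-- Real part `(a + aᴴ)/2` of a matrix. -/
noncomputable def reM {d : ℕ} (a : Matrix (Fin d) (Fin d) ℂ) : Matrix (Fin d) (Fin d) ℂ :=
  (1/2 : ℂ) • (a + aᴴ)

/-- Imaginary part `(a - aᴴ)/(2i)` of a matrix. -/
noncomputable def imM {d : ℕ} (a : Matrix (Fin d) (Fin d) ℂ) : Matrix (Fin d) (Fin d) ℂ :=
  (-(Complex.I)/2) • (a - aᴴ)

/-- A density matrix: positive semidefinite with trace 1. -/
def IsDensity {d : ℕ} (ρ : Matrix (Fin d) (Fin d) ℂ) : Prop :=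
  ρ.PosSemidef ∧ ρ.trace = 1

/-- Trace preservation for a linear map on matrices. -/
def IsTracePreserving {d : ℕ}
    (𝓜 : Matrix (Fin d) (Fin d) ℂ →ₗ[ℂ] Matrix (Fin d) (Fin d) ℂ) : Prop :=
  ∀ a, (𝓜 a).trace = a.trace

/-- Complete positivity: all the ampliations `𝓜 ⊗ id_k` preserve positive semidefiniteness. -/
def IsCompletelyPositive {d : ℕ}
    (𝓜 : Matrix (Fin d) (Fin d) ℂ →ₗ[ℂ] Matrix (Fin d) (Fin d) ℂ) : Prop :=
  ∀ (k : ℕ) (M : Matrix (Fin d × Fin k) (Fin d × Fin k) ℂ), M.PosSemidef →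
    (Matrix.of fun (p q : Fin d × Fin k) =>
      𝓜 (Matrix.of fun a b => M (a, p.2) (b, q.2)) p.1 q.1).PosSemidef

/-- The rank-one projection `|ξ⟩⟨ξ|`. -/
noncomputable def proj {d : ℕ} (ξ : Fin d → ℂ) : Matrix (Fin d) (Fin d) ℂ :=
  Matrix.vecMulVec ξ (star ξ)

/-- The TV-norm `Tr (Re a)₊ + Tr (Re a)₋ + Tr (Im a)₊ + Tr (Im a)₋`. -/
noncomputable def tvNorm {d : ℕ} (a : Matrix (Fin d) (Fin d) ℂ) : ℝ :=
  ((matPosPart (reM a)).trace).re + ((matNegPart (reM a)).trace).re +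
    ((matPosPart (imM a)).trace).re + ((matNegPart (imM a)).trace).re

/-- The completely depolarizing channel `Ω(a) = (Tr a / d) • I`. -/
noncomputable def depol (d : ℕ) : Matrix (Fin d) (Fin d) ℂ →ₗ[ℂ] Matrix (Fin d) (Fin d) ℂ where
  toFun a := (a.trace / d) • (1 : Matrix (Fin d) (Fin d) ℂ)
  map_add' a b := by simp [Matrix.trace_add, add_div, add_smul]
  map_smul' c a := by simp [Matrix.trace_smul, smul_smul, mul_div_assoc]


section Stmt4Aux

open Matrix ComplexOrder

variable {d : ℕ}

open scoped MatrixOrder in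
private lemma psdSqrt_eq_cfc {A : Matrix (Fin d) (Fin d) ℂ} (hA : A.PosSemidef) :
    psdSqrt hA = CFC.sqrt A := by
  rw [CFC.sqrt_eq_cfc, cfc_nnreal_eq_real _ A, hA.1.cfc_eq]
  simp only [psdSqrt, IsHermitian.cfc, Unitary.conjStarAlgAut_apply]
  congr 3
  funext i
  simp [Real.coe_toNNReal', Real.coe_sqrt]
  rw [max_eq_left (hA.eigenvalues_nonneg i)]

private lemma psd_diag_entry {M : Matrix (Fin d) (Fin d) ℂ} (hM : M.PosSemidef) (i : Fin d) :
    0 ≤ M i i := by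
  exact hM.diag_nonneg

private lemma trace_re_nonneg {M : Matrix (Fin d) (Fin d) ℂ} (hM : M.PosSemidef) :
    0 ≤ (M.trace).re := by
  have h : (0 : ℂ) ≤ M.trace := Finset.sum_nonneg fun i _ => psd_diag_entry hM i
  exact (Complex.le_def.mp h).1

private lemma psd_smul {M : Matrix (Fin d) (Fin d) ℂ} (hM : M.PosSemidef) {c : ℝ} (hc : 0 ≤ c) :
    ((c : ℂ) • M).PosSemidef := by
  rw [posSemidef_iff_dotProduct_mulVec]
  constructor
  · unfold Matrix.IsHermitian at *
    rw [conjTranspose_smul, hM.1]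
    norm_num
  · intro x
    rw [smul_mulVec, dotProduct_smul, smul_eq_mul]
    exact mul_nonneg (by exact_mod_cast hc) (hM.dotProduct_mulVec_nonneg x)

private lemma psd_sum {ι : Type*} {s : Finset ι} {f : ι → Matrix (Fin d) (Fin d) ℂ}
    (h : ∀ i ∈ s, (f i).PosSemidef) : (∑ i ∈ s, f i).PosSemidef := by
  classical
  induction s using Finset.induction with
  | empty => simpa using (Matrix.PosSemidef.zero : (0 : Matrix (Fin d) (Fin d) ℂ).PosSemidef)
  | insert _ _ hx ih =>
    rw [Finset.sum_insert hx]
    exact (h _ (Finset.mem_insert_self _ _)).add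
      (ih fun i hi => h i (Finset.mem_insert_of_mem hi))

private lemma unitary_conj_mul (U : Matrix.unitaryGroup (Fin d) ℂ) (f g : Fin d → ℂ) :
    ((U : Matrix (Fin d) (Fin d) ℂ) * diagonal f * star (U : Matrix (Fin d) (Fin d) ℂ)) *
      ((U : Matrix (Fin d) (Fin d) ℂ) * diagonal g * star (U : Matrix (Fin d) (Fin d) ℂ)) =
    (U : Matrix (Fin d) (Fin d) ℂ) * diagonal (f * g) * star (U : Matrix (Fin d) (Fin d) ℂ) := by
  have h : star (U : Matrix (Fin d) (Fin d) ℂ) * (U : Matrix (Fin d) (Fin d) ℂ) = 1 :=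
    Matrix.mem_unitaryGroup_iff'.mp U.2
  simp only [← Matrix.mul_assoc]
  rw [Matrix.mul_assoc ((U : Matrix (Fin d) (Fin d) ℂ) * diagonal f)
      (star (U : Matrix (Fin d) (Fin d) ℂ)) (U : Matrix (Fin d) (Fin d) ℂ), h, Matrix.mul_one,
    Matrix.mul_assoc (U : Matrix (Fin d) (Fin d) ℂ) (diagonal f) (diagonal g),
    diagonal_mul_diagonal]
  rfl

private lemma trace_unitary_conj (U : Matrix.unitaryGroup (Fin d) ℂ) (f : Fin d → ℂ) :
    ((U : Matrix (Fin d) (Fin d) ℂ) * diagonal f * star (U : Matrix (Fin d) (Fin d) ℂ)).trace =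
      ∑ i, f i := by
  rw [trace_mul_cycle, Matrix.mem_unitaryGroup_iff'.mp U.2, Matrix.one_mul, trace_diagonal]

private lemma psd_unitary_conj (U : Matrix.unitaryGroup (Fin d) ℂ) {f : Fin d → ℝ}
    (hf : ∀ i, 0 ≤ f i) :
    ((U : Matrix (Fin d) (Fin d) ℂ) * diagonal (fun i => (f i : ℂ)) *
      star (U : Matrix (Fin d) (Fin d) ℂ)).PosSemidef := by
  rw [Matrix.star_eq_conjTranspose]
  exact (Matrix.PosSemidef.diagonal fun i => show (0:ℂ) ≤ (f i : ℂ) by exact_mod_cast hf i).mul_mul_conjTranspose_same _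

private lemma hermSpec {X : Matrix (Fin d) (Fin d) ℂ} (hX : X.IsHermitian) :
    X = (hX.eigenvectorUnitary : Matrix (Fin d) (Fin d) ℂ) *
      diagonal (fun i => (hX.eigenvalues i : ℂ)) *
      star (hX.eigenvectorUnitary : Matrix (Fin d) (Fin d) ℂ) :=
  hX.spectral_theorem

private lemma traceNorm_herm {X : Matrix (Fin d) (Fin d) ℂ} (hX : X.IsHermitian) :
    traceNorm X = ∑ i, |hX.eigenvalues i| := by
  set U := hX.eigenvectorUnitary
  set l := hX.eigenvalues
  set C := (U : Matrix (Fin d) (Fin d) ℂ) * diagonal (fun i => ((|l i| : ℝ) : ℂ)) *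
    star (U : Matrix (Fin d) (Fin d) ℂ) with hCdef
  have hC : C.PosSemidef := psd_unitary_conj U fun i => abs_nonneg _
  have hsq : C ^ 2 = Xᴴ * X := by
    have habs : (fun i => ((|l i| : ℝ) : ℂ)) * (fun i => ((|l i| : ℝ) : ℂ)) =
        (fun i => ((l i : ℝ) : ℂ)) * (fun i => ((l i : ℝ) : ℂ)) := by
      funext i
      simp only [Pi.mul_apply, ← Complex.ofReal_mul, abs_mul_abs_self]
    rw [pow_two, hCdef, unitary_conj_mul, hX.eq, habs]
    conv_rhs => rw [hermSpec hX, unitary_conj_mul]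
  have hCs : C = psdSqrt (Matrix.posSemidef_conjTranspose_mul_self X) := by
    open scoped MatrixOrder in rw [psdSqrt_eq_cfc, ← hsq, CFC.sqrt_sq C hC.nonneg]
  rw [traceNorm, ← hCs, hCdef, trace_unitary_conj, Complex.re_sum]
  simp

private lemma herm_decomp {X : Matrix (Fin d) (Fin d) ℂ} (hX : X.IsHermitian) :
    ∃ (A B : Matrix (Fin d) (Fin d) ℂ) (a b : ℝ),
      A.PosSemidef ∧ B.PosSemidef ∧ X = A - B ∧ 0 ≤ a ∧ 0 ≤ b ∧
      A.trace = (a : ℂ) ∧ B.trace = (b : ℂ) ∧ a + b = traceNorm X ∧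
      (a : ℂ) - (b : ℂ) = X.trace := by
  classical
  set U := hX.eigenvectorUnitary
  set l := hX.eigenvalues
  have key : ∀ r : ℝ, max r 0 + max (-r) 0 = |r| := by
    intro r
    rcases le_total 0 r with h | h
    · rw [abs_of_nonneg h, max_eq_left h, max_eq_right (neg_nonpos.mpr h), add_zero]
    · rw [abs_of_nonpos h, max_eq_right h, max_eq_left (neg_nonneg.mpr h), zero_add]
  refine ⟨(U : Matrix (Fin d) (Fin d) ℂ) * diagonal (fun i => ((max (l i) 0 : ℝ) : ℂ)) *
      star (U : Matrix (Fin d) (Fin d) ℂ),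
    (U : Matrix (Fin d) (Fin d) ℂ) * diagonal (fun i => ((max (-(l i)) 0 : ℝ) : ℂ)) *
      star (U : Matrix (Fin d) (Fin d) ℂ),
    ∑ i, max (l i) 0, ∑ i, max (-(l i)) 0,
    psd_unitary_conj U fun i => le_max_right _ _,
    psd_unitary_conj U fun i => le_max_right _ _, ?_, ?_, ?_, ?_, ?_, ?_, ?_⟩
  · have hfg : (fun i => ((max (l i) 0 : ℝ) : ℂ) - ((max (-(l i)) 0 : ℝ) : ℂ)) =
        (fun i => ((l i : ℝ) : ℂ)) := by
      funext i
      rw [← Complex.ofReal_sub, max_zero_sub_max_neg_zero_eq_self]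
    rw [← Matrix.sub_mul, ← Matrix.mul_sub, diagonal_sub, hfg]
    exact hermSpec hX
  · exact Finset.sum_nonneg fun i _ => le_max_right _ _
  · exact Finset.sum_nonneg fun i _ => le_max_right _ _
  · rw [trace_unitary_conj]; push_cast; ring
  · rw [trace_unitary_conj]; push_cast; ring
  · rw [traceNorm_herm hX, ← Finset.sum_add_distrib]
    exact Finset.sum_congr rfl fun i _ => key _
  · conv_rhs => rw [hermSpec hX, trace_unitary_conj]
    rw [← Complex.ofReal_sub, ← Finset.sum_sub_distrib]
    push_cast
    exact Finset.sum_congr rfl fun i _ => by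
      rw [← Complex.ofReal_sub, max_zero_sub_max_neg_zero_eq_self]

private lemma trace_mul_re_nonneg {A B : Matrix (Fin d) (Fin d) ℂ}
    (hA : A.PosSemidef) (hB : B.PosSemidef) : 0 ≤ ((A * B).trace).re := by
  classical
  have h1 : A * B = psdSqrt hA * (psdSqrt hA * B) := by
    open scoped MatrixOrder in
    rw [← Matrix.mul_assoc, psdSqrt_eq_cfc, CFC.sqrt_mul_sqrt_self A hA.nonneg]
  rw [h1, trace_mul_comm]
  have hpsd := hB.mul_mul_conjTranspose_same (psdSqrt hA)
  open scoped MatrixOrder in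
  rw [psdSqrt_eq_cfc, (CFC.sqrt_nonneg A).posSemidef.1] at hpsd
  rw [psdSqrt_eq_cfc]
  exact trace_re_nonneg hpsd

private lemma traceNorm_sub_le {A B : Matrix (Fin d) (Fin d) ℂ}
    (hA : A.PosSemidef) (hB : B.PosSemidef) :
    traceNorm (A - B) ≤ (A.trace).re + (B.trace).re := by
  classical
  have hX : (A - B).IsHermitian := hA.1.sub hB.1
  set U := hX.eigenvectorUnitary with hU
  set l := hX.eigenvalues with hl
  set s : Fin d → ℝ := fun i => if 0 ≤ l i then 1 else -1 with hs
  set P := (U : Matrix (Fin d) (Fin d) ℂ) * diagonal (fun i => (s i : ℂ)) *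
    star (U : Matrix (Fin d) (Fin d) ℂ) with hP
  have hls : ∀ i, l i * s i = |l i| := by
    intro i
    rcases le_or_gt 0 (l i) with h | h
    · simp [hs, h, abs_of_nonneg h]
    · simp [hs, not_le.mpr h, abs_of_neg h]
  have hXP : ((A - B) * P).trace = ((∑ i, |l i| : ℝ) : ℂ) := by
    conv_lhs => rw [hermSpec hX, hP, unitary_conj_mul, trace_unitary_conj]
    push_cast
    exact Finset.sum_congr rfl fun i _ => by rw [Pi.mul_apply, ← Complex.ofReal_mul, hls i]
  have hone : (1 : Matrix (Fin d) (Fin d) ℂ) =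
      (U : Matrix (Fin d) (Fin d) ℂ) * diagonal (fun _ => (1 : ℂ)) *
        star (U : Matrix (Fin d) (Fin d) ℂ) := by
    rw [Matrix.diagonal_one, Matrix.mul_one, Matrix.mem_unitaryGroup_iff.mp U.2]
  have h1mP : ((1 : Matrix (Fin d) (Fin d) ℂ) - P).PosSemidef := by
    have : (1 : Matrix (Fin d) (Fin d) ℂ) - P =
        (U : Matrix (Fin d) (Fin d) ℂ) * diagonal (fun i => ((1 - s i : ℝ) : ℂ)) *
          star (U : Matrix (Fin d) (Fin d) ℂ) := by
      rw [hP]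
      conv_lhs => rw [hone]
      rw [← Matrix.sub_mul, ← Matrix.mul_sub, diagonal_sub]
      congr 2
      funext i
      push_cast
      ring
    rw [this]
    refine psd_unitary_conj U fun i => ?_
    rcases le_or_gt 0 (l i) with h | h
    · simp [hs, h]
    · simp [hs, not_le.mpr h]
  have h1pP : ((1 : Matrix (Fin d) (Fin d) ℂ) + P).PosSemidef := by
    have : (1 : Matrix (Fin d) (Fin d) ℂ) + P =
        (U : Matrix (Fin d) (Fin d) ℂ) * diagonal (fun i => ((1 + s i : ℝ) : ℂ)) *
          star (U : Matrix (Fin d) (Fin d) ℂ) := by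
      rw [hP]
      conv_lhs => rw [hone]
      rw [← Matrix.add_mul, ← Matrix.mul_add, diagonal_add]
      congr 2
      funext i
      push_cast
      ring
    rw [this]
    refine psd_unitary_conj U fun i => ?_
    rcases le_or_gt 0 (l i) with h | h
    · simp [hs, h]
    · simp [hs, not_le.mpr h]
  have hAle : ((A * P).trace).re ≤ (A.trace).re := by
    have h := trace_mul_re_nonneg hA h1mP
    rw [Matrix.mul_sub, Matrix.mul_one, trace_sub, Complex.sub_re] at h
    linarith
  have hBge : -((B.trace).re) ≤ ((B * P).trace).re := by
    have h := trace_mul_re_nonneg hB h1pP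
    rw [Matrix.mul_add, Matrix.mul_one, trace_add, Complex.add_re] at h
    linarith
  have hsplit : ((A - B) * P).trace = (A * P).trace - (B * P).trace := by
    rw [Matrix.sub_mul, trace_sub]
  rw [traceNorm_herm hX]
  have : ((∑ i, |l i| : ℝ) : ℂ).re = ((A * P).trace).re - ((B * P).trace).re := by
    rw [← hXP, hsplit, Complex.sub_re]
  rw [Complex.ofReal_re] at this
  linarith

private lemma sum_outer (U : Matrix.unitaryGroup (Fin d) ℂ) (f : Fin d → ℂ) :
    (U : Matrix (Fin d) (Fin d) ℂ) * diagonal f * star (U : Matrix (Fin d) (Fin d) ℂ) =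
      ∑ i, f i • vecMulVec (fun j => (U : Matrix (Fin d) (Fin d) ℂ) j i)
        (star fun j => (U : Matrix (Fin d) (Fin d) ℂ) j i) := by
  ext j k
  rw [Matrix.sum_apply]
  simp only [Matrix.mul_apply, diagonal_apply, Matrix.star_apply, Matrix.smul_apply,
    vecMulVec_apply, Pi.star_apply, smul_eq_mul, mul_ite, mul_zero, ite_mul, zero_mul,
    Finset.sum_ite_eq, Finset.sum_ite_eq', Finset.mem_univ, if_true]
  exact Finset.sum_congr rfl fun i _ => by ring

private lemma unit_column (U : Matrix.unitaryGroup (Fin d) ℂ) (i : Fin d) :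
    star (fun j => (U : Matrix (Fin d) (Fin d) ℂ) j i) ⬝ᵥ
      (fun j => (U : Matrix (Fin d) (Fin d) ℂ) j i) = 1 := by
  have h : star (U : Matrix (Fin d) (Fin d) ℂ) * (U : Matrix (Fin d) (Fin d) ℂ) = 1 :=
    Matrix.mem_unitaryGroup_iff'.mp U.2
  have h2 : (star (U : Matrix (Fin d) (Fin d) ℂ) * (U : Matrix (Fin d) (Fin d) ℂ)) i i =
      (1 : Matrix (Fin d) (Fin d) ℂ) i i := by rw [h]
  simpa [Matrix.mul_apply, dotProduct, Matrix.star_apply, Matrix.one_apply] using h2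

private lemma dom_psd (𝓜 : Matrix (Fin d) (Fin d) ℂ →ₗ[ℂ] Matrix (Fin d) (Fin d) ℂ)
    (κ : Matrix (Fin d) (Fin d) ℂ)
    (hdom : ∀ ξ : Fin d → ℂ, star ξ ⬝ᵥ ξ = 1 → (𝓜 (proj ξ) - κ).PosSemidef)
    {τ : Matrix (Fin d) (Fin d) ℂ} (hτ : τ.PosSemidef) :
    (𝓜 τ - τ.trace • κ).PosSemidef := by
  classical
  set U := hτ.1.eigenvectorUnitary
  set l := hτ.1.eigenvalues
  have hτs : τ = ∑ i, (l i : ℂ) • vecMulVec (fun j => (U : Matrix (Fin d) (Fin d) ℂ) j i)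
      (star fun j => (U : Matrix (Fin d) (Fin d) ℂ) j i) := by
    conv_lhs => rw [hermSpec hτ.1, sum_outer]
  have htr : τ.trace = ∑ i, (l i : ℂ) := by
    conv_lhs => rw [hermSpec hτ.1, trace_unitary_conj]
  have hsum : 𝓜 τ - τ.trace • κ =
      ∑ i, (l i : ℂ) • (𝓜 (proj (fun j => (U : Matrix (Fin d) (Fin d) ℂ) j i)) - κ) := by
    rw [htr]
    conv_lhs => rw [hτs]
    rw [map_sum, Finset.sum_smul, ← Finset.sum_sub_distrib]
    refine Finset.sum_congr rfl fun i _ => ?_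
    rw [_root_.map_smul, ← smul_sub]
    rfl
  rw [hsum]
  exact psd_sum fun i _ => psd_smul (hdom _ (unit_column U i)) (hτ.eigenvalues_nonneg i)

end Stmt4Aux

/-- exponential contraction of the iterates of a channel with positive
Markov–Dobrushin constant. -/
theorem stmt4 {d : ℕ} (𝓜 : Matrix (Fin d) (Fin d) ℂ →ₗ[ℂ] Matrix (Fin d) (Fin d) ℂ)
    (hCP : IsCompletelyPositive 𝓜) (hTP : IsTracePreserving 𝓜)
    (κ : Matrix (Fin d) (Fin d) ℂ) (hκ : κ.PosSemidef)
    (hdom : ∀ ξ : Fin d → ℂ, star ξ ⬝ᵥ ξ = 1 → (𝓜 (proj ξ) - κ).PosSemidef)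
    (hpos : 0 < (κ.trace).re)
    (ρ σ : Matrix (Fin d) (Fin d) ℂ) (hρ : IsDensity ρ) (hσ : IsDensity σ) (n : ℕ) :
    traceNorm ((𝓜 ^ n) ρ - (𝓜 ^ n) σ) ≤ 2 * (1 - (κ.trace).re) ^ n := by
  classical
  set t := (κ.trace).re with ht
  have hd : 0 < d := by
    rcases Nat.eq_zero_or_pos d with h0 | h
    · subst h0
      simp [Matrix.trace, t] at hpos
    · exact h
  have ht1 : t ≤ 1 := by
    set ξ : Fin d → ℂ := Pi.single ⟨0, hd⟩ 1 with hξ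
    have hunit : star ξ ⬝ᵥ ξ = 1 := by
      simp [hξ, dotProduct, Pi.single_apply]
    have h := trace_re_nonneg (hdom ξ hunit)
    rw [Matrix.trace_sub, Complex.sub_re, hTP] at h
    have htrp : (proj ξ).trace = 1 := by
      simp [proj, Matrix.trace, Matrix.diag, Matrix.vecMulVec_apply, hξ, Pi.single_apply]
    rw [htrp] at h
    simp only [Complex.one_re] at h
    linarith
  have h1t : 0 ≤ 1 - t := by linarith
  have main : ∀ m : ℕ, ((𝓜 ^ m) (ρ - σ)).IsHermitian ∧ ((𝓜 ^ m) (ρ - σ)).trace = 0 ∧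
      traceNorm ((𝓜 ^ m) (ρ - σ)) ≤ 2 * (1 - t) ^ m := by
    intro m
    induction m with
    | zero =>
      refine ⟨by simpa using hρ.1.1.sub hσ.1.1, by simp [Matrix.trace_sub, hρ.2, hσ.2], ?_⟩
      have h := traceNorm_sub_le hρ.1 hσ.1
      rw [hρ.2, hσ.2] at h
      simp only [pow_zero, mul_one]
      simpa using h.trans_eq (by norm_num)
    | succ m ih =>
      obtain ⟨hH, htr0, hnorm⟩ := ih
      set X := (𝓜 ^ m) (ρ - σ) with hXdef
      have hstep : (𝓜 ^ (m + 1)) (ρ - σ) = 𝓜 X := by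
        rw [pow_succ', Module.End.mul_apply]
      obtain ⟨A, B, a, b, hA, hB, hXAB, ha0, hb0, hTrA, hTrB, habn, habt⟩ := herm_decomp hH
      have hab : a = b := by
        have h1 : (a : ℂ) - b = 0 := by rw [habt, htr0]
        exact_mod_cast sub_eq_zero.mp h1
      have hMA := dom_psd 𝓜 κ hdom hA
      have hMB := dom_psd 𝓜 κ hdom hB
      rw [hTrA] at hMA
      rw [hTrB] at hMB
      have hMX : 𝓜 X = (𝓜 A - (a : ℂ) • κ) - (𝓜 B - (b : ℂ) • κ) := by
        rw [hab, sub_sub_sub_cancel_right, ← map_sub, ← hXAB]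
      have htA : ((𝓜 A - (a : ℂ) • κ).trace).re = a - a * t := by
        rw [Matrix.trace_sub, Matrix.trace_smul, hTP A, hTrA, smul_eq_mul, Complex.sub_re,
          Complex.ofReal_re, Complex.re_ofReal_mul, ht]
      have htB : ((𝓜 B - (b : ℂ) • κ).trace).re = b - b * t := by
        rw [Matrix.trace_sub, Matrix.trace_smul, hTP B, hTrB, smul_eq_mul, Complex.sub_re,
          Complex.ofReal_re, Complex.re_ofReal_mul, ht]
      have hle := traceNorm_sub_le hMA hMB
      rw [← hMX, htA, htB] at hle
      refine ⟨?_, ?_, ?_⟩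
      · rw [hstep, hMX]
        exact hMA.1.sub hMB.1
      · rw [hstep, hTP X]
        exact htr0
      · rw [hstep]
        calc traceNorm (𝓜 X) ≤ (a - a * t) + (b - b * t) := hle
          _ = (1 - t) * (a + b) := by ring
          _ = (1 - t) * traceNorm X := by rw [habn]
          _ ≤ (1 - t) * (2 * (1 - t) ^ m) := mul_le_mul_of_nonneg_left hnorm h1t
          _ = 2 * (1 - t) ^ (m + 1) := by ring
  have h := (main n).2.2
  rw [map_sub] at h
  exact h
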